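/- Let G be an E-free graph with no K_4 subgraph and let Q = v_1 v_2 v_3 v_4 v_5 v_1 be an induced 5-cycle in G which is a smallest induced odd cycle of G. Then for every index i, at least one of the sets A_i' and A_{i+1}' is empty; consequently at most two of the sets A_1', ..., A_5' are nonempty. -/

import Mathlib

/-- `H` is contained in `G` as an induced subgraph. -/
def ContainsInduced {α β : Type*} (H : SimpleGraph α) (G : SimpleGraph β) : Prop :=
  ∃ f : α ↪ β, ∀ a b, G.Adj (f a) (f b) ↔ H.Adj a b

/-- The graph `E = S_{1,2,2}`: centre `0`, leaf `1`, and the paths `0 2 3` and `0 4 5`. -/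
def graphE : SimpleGraph (Fin 6) :=
  SimpleGraph.fromRel (fun a b =>
    ((a : ℕ), (b : ℕ)) ∈ [(0, 1), (0, 2), (2, 3), (0, 4), (4, 5)])

/-- `u : ZMod k → V` lists the vertices (in cyclic order) of an induced cycle of
length `k` in `G`. -/
def IsInducedCycle {V : Type*} (G : SimpleGraph V) {k : ℕ} (u : ZMod k → V) : Prop :=
  Function.Injective u ∧ ∀ i j : ZMod k, G.Adj (u i) (u j) ↔ (j = i + 1 ∨ i = j + 1)

/-- `v : ZMod p → V` is a smallest induced odd cycle of `G` of length `p ≥ 5`: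
an induced odd cycle of length `p ≥ 5` such that `G` has no induced odd cycle of
length `k` with `5 ≤ k < p`. -/
def IsSmallestInducedOddCycle {V : Type*} (G : SimpleGraph V) {p : ℕ}
    (v : ZMod p → V) : Prop :=
  5 ≤ p ∧ Odd p ∧ IsInducedCycle G v ∧
    ∀ k : ℕ, 5 ≤ k → k < p → Odd k → ∀ u : ZMod k → V, ¬ IsInducedCycle G u

/-- `A_i`: the vertices outside the cycle `Q` whose neighbourhood on `Q` is
exactly `{v_i}`. -/
def setA {V : Type*} (G : SimpleGraph V) {p : ℕ} (v : ZMod p → V) (i : ZMod p) :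
    Set V :=
  {w | w ∉ Set.range v ∧ ∀ j : ZMod p, G.Adj w (v j) ↔ j = i}

/-- `B_i`: the vertices outside the cycle `Q` whose neighbourhood on `Q` is
exactly `{v_i, v_{i+2}}`. -/
def setB {V : Type*} (G : SimpleGraph V) {p : ℕ} (v : ZMod p → V) (i : ZMod p) :
    Set V :=
  {w | w ∉ Set.range v ∧ ∀ j : ZMod p, G.Adj w (v j) ↔ (j = i ∨ j = i + 2)}

/-- `C_i`: the vertices outside the cycle `Q` whose neighbourhood on `Q` is
exactly `{v_i, v_{i+1}, v_{i+2}}`. -/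
def setC {V : Type*} (G : SimpleGraph V) {p : ℕ} (v : ZMod p → V) (i : ZMod p) :
    Set V :=
  {w | w ∉ Set.range v ∧ ∀ j : ZMod p, G.Adj w (v j) ↔ (j = i ∨ j = i + 1 ∨ j = i + 2)}

/-- `D_i`: the vertices outside the cycle `Q` whose neighbourhood on `Q` is
exactly `{v_i, v_{i+1}, v_{i+2}, v_{i+3}}`. -/
def setD {V : Type*} (G : SimpleGraph V) {p : ℕ} (v : ZMod p → V) (i : ZMod p) :
    Set V :=
  {w | w ∉ Set.range v ∧
    ∀ j : ZMod p, G.Adj w (v j) ↔ (j = i ∨ j = i + 1 ∨ j = i + 2 ∨ j = i + 3)}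

/-- `A_i'`: the vertices of `A_i` having a neighbour in `A_i`. -/
def setA' {V : Type*} (G : SimpleGraph V) {p : ℕ} (v : ZMod p → V) (i : ZMod p) :
    Set V :=
  {w ∈ setA G v i | ∃ w' ∈ setA G v i, G.Adj w w'}

/-!
If `x ∈ A_i` and `y ∈ A_{i+1}` were non-adjacent, then `v_i` with the pendant vertex `x` and the
induced paths `v_i v_{i+1} y` and `v_i v_{i-1} v_{i-2}` would be an induced `E`; so `A_i` is
complete to `A_{i+1}`, and an edge inside each of them would span a `K_4`. Hence the indices `i`
with `A_i'` nonempty are pairwise non-consecutive modulo 5, and there are at most two of them.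
-/

instance : DecidableRel graphE.Adj := fun a b =>
  decidable_of_iff _ (SimpleGraph.fromRel_adj _ a b).symm

section InducedSubgraph

variable {α β : Type*} {H : SimpleGraph α} {G : SimpleGraph β}

lemma containsInduced_of_adj_iff (hH : ∀ a b, (∀ c, H.Adj a c ↔ H.Adj b c) → a = b)
    (f : α → β) (hf : ∀ a b, G.Adj (f a) (f b) ↔ H.Adj a b) : ContainsInduced H G :=
  ⟨⟨f, fun a b hab => hH a b fun c => by rw [← hf, ← hf, hab]⟩, hf⟩

lemma graphE_eq_of_adj_iff : ∀ a b : Fin 6, (∀ c, graphE.Adj a c ↔ graphE.Adj b c) → a = b := by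
  decide

end InducedSubgraph

lemma SimpleGraph.not_cliqueFree_four_of_adj {V : Type*} {G : SimpleGraph V} {a a' b b' : V}
    (ha : G.Adj a a') (hb : G.Adj b b') (hab : G.Adj a b) (hab' : G.Adj a b')
    (ha'b : G.Adj a' b) (ha'b' : G.Adj a' b') : ¬ G.CliqueFree 4 := by
  classical
  have h3 : G.IsNClique 3 {a', b, b'} := is3Clique_triple_iff.2 ⟨ha'b, ha'b', hb⟩
  refine fun h => h (insert a {a', b, b'}) (h3.insert ?_)
  simp only [Finset.mem_insert, Finset.mem_singleton, forall_eq_or_imp, forall_eq]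
  exact ⟨ha, hab, hab'⟩

section Rotation

variable {V : Type*} {G : SimpleGraph V} {k : ℕ} {v : ZMod k → V}

lemma IsInducedCycle.rotate (hC : IsInducedCycle G v) (i : ZMod k) :
    IsInducedCycle G (fun j => v (j + i)) := by
  refine ⟨fun a b h => add_right_cancel (hC.1 h), fun a b => ?_⟩
  simp only [hC.2, add_right_comm _ i (1 : ZMod k), add_left_inj]

lemma setA_rotate (i a : ZMod k) : setA G (fun j => v (j + i)) a = setA G v (a + i) := by
  ext w
  have hrange : Set.range (fun j => v (j + i)) = Set.range v :=
    (add_right_surjective i).range_comp v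
  refine and_congr (by rw [hrange]) ?_
  exact (Equiv.addRight i).forall_congr fun j => by simp

end Rotation

section FiveCycle

variable {V : Type*} {G : SimpleGraph V} {v : ZMod 5 → V}

lemma adj_of_mem_setA_zero_of_mem_setA_one (hE : ¬ ContainsInduced graphE G)
    (hC : IsInducedCycle G v) {x y : V} (hx : x ∈ setA G v 0) (hy : y ∈ setA G v 1) :
    G.Adj x y := by
  by_contra hxy
  have hx' : ∀ j, G.Adj (v j) x ↔ j = 0 := fun j => (G.adj_comm _ _).trans (hx.2 j)
  have hy' : ∀ j, G.Adj (v j) y ↔ j = 1 := fun j => (G.adj_comm _ _).trans (hy.2 j)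
  have hyx : ¬ G.Adj y x := fun h => hxy h.symm
  refine hE (containsInduced_of_adj_iff graphE_eq_of_adj_iff
    ![v 0, x, v 1, y, v 4, v 3] fun a b => ?_)
  fin_cases a <;> fin_cases b <;>
    simp only [Fin.zero_eta, Fin.mk_one, Fin.reduceFinMk, Matrix.cons_val, hx.2, hy.2, hx', hy',
      hC.2, SimpleGraph.irrefl, iff_false_intro hxy, iff_false_intro hyx] <;>
    decide

lemma adj_of_mem_setA_of_mem_setA_add_one (hE : ¬ ContainsInduced graphE G)
    (hC : IsInducedCycle G v) (i : ZMod 5) {x y : V} (hx : x ∈ setA G v i)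
    (hy : y ∈ setA G v (i + 1)) : G.Adj x y := by
  rw [← zero_add i, ← setA_rotate] at hx
  rw [add_comm, ← setA_rotate] at hy
  exact adj_of_mem_setA_zero_of_mem_setA_one hE (hC.rotate i) hx hy

lemma setA'_eq_empty_or_setA'_add_one_eq_empty (hE : ¬ ContainsInduced graphE G)
    (hK4 : G.CliqueFree 4) (hC : IsInducedCycle G v) (i : ZMod 5) :
    setA' G v i = ∅ ∨ setA' G v (i + 1) = ∅ := by
  rw [← Set.not_nonempty_iff_eq_empty, ← Set.not_nonempty_iff_eq_empty, ← not_and_or]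
  rintro ⟨⟨a, ha, a', ha', haa'⟩, ⟨b, hb, b', hb', hbb'⟩⟩
  have hadj {x y : V} := adj_of_mem_setA_of_mem_setA_add_one hE hC i (x := x) (y := y)
  exact SimpleGraph.not_cliqueFree_four_of_adj haa' hbb' (hadj ha hb) (hadj ha hb')
    (hadj ha' hb) (hadj ha' hb') hK4

end FiveCycle

lemma ZMod.ncard_le_two_of_forall_add_one_notMem {S : Set (ZMod 5)}
    (hS : ∀ i ∈ S, i + 1 ∉ S) : S.ncard ≤ 2 := by
  classical
  have key : ∀ s : Finset (ZMod 5), (∀ i ∈ s, i + 1 ∉ s) → s.card ≤ 2 := by decide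
  rw [Set.ncard_eq_toFinset_card']
  exact key _ (by simpa using hS)

theorem setA'_nonempty_at_most_two_general {V : Type*} (G : SimpleGraph V)
    (hE : ¬ ContainsInduced graphE G) (hK4 : G.CliqueFree 4)
    (v : ZMod 5 → V) (hQ : IsSmallestInducedOddCycle G v) :
    (∀ i : ZMod 5, setA' G v i = ∅ ∨ setA' G v (i + 1) = ∅) ∧
    {i : ZMod 5 | (setA' G v i).Nonempty}.ncard ≤ 2 := by
  have hA' := setA'_eq_empty_or_setA'_add_one_eq_empty hE hK4 hQ.2.2.1
  refine ⟨hA', ZMod.ncard_le_two_of_forall_add_one_notMem fun i hi hi1 => ?_⟩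
  rcases hA' i with h | h
  exacts [hi.ne_empty h, hi1.ne_empty h]

/-- Let `G` be an `E`-free graph with no `K_4` subgraph and let `Q = v_1 … v_5 v_1` be
an induced 5-cycle of `G` which is a smallest induced odd cycle of `G`.  Then for every
index `i` at least one of `A_i'` and `A_{i+1}'` is empty; consequently at most two of
the sets `A_1', …, A_5'` are nonempty. -/
theorem setA'_nonempty_at_most_two {V : Type*} [Fintype V] (G : SimpleGraph V)
    (hE : ¬ ContainsInduced graphE G) (hK4 : G.CliqueFree 4)
    (v : ZMod 5 → V) (hQ : IsSmallestInducedOddCycle G v) :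
    (∀ i : ZMod 5, setA' G v i = ∅ ∨ setA' G v (i + 1) = ∅) ∧
    {i : ZMod 5 | (setA' G v i).Nonempty}.ncard ≤ 2 :=
  setA'_nonempty_at_most_two_general G hE hK4 v hQ
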